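/- Let 𝓗 be a complex Hilbert space and let A be a self-adjoint operator on 𝓗. Let λ₀ < λ₁, set μ = (λ₀+λ₁)/2 and ρ = (λ₁−λ₀)/2. If there exists a k-dimensional subspace M ⊆ 𝔇(A) such that ‖(A − μ)ψ‖ < ρ‖ψ‖ for every nonzero ψ ∈ M, then tr(P_{(λ₀,λ₁)}(A)) ≥ k, i.e., dim Ran P_{(λ₀,λ₁)}(A) ≥ k. -/

import Mathlib

open MeasureTheory Filter Set Topology
open scoped ENNReal NNReal Classical

noncomputable section

/-- A (possibly unbounded) self-adjoint operator on a complex Hilbert space, packaged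
together with its projection-valued spectral measure.  The fields `proj_*` state that
`proj` is a projection-valued measure, `diag` is the associated family of scalar spectral
measures `μ_ψ(Ω) = ⟪ψ, P(Ω) ψ⟫`, and the fields `mem_domain_iff`/`quad` state that the
operator is the one associated to this spectral measure via the spectral theorem
(domain `= {ψ : ∫ x² dμ_ψ < ∞}`, and quadratic form `⟪ψ, A ψ⟫ = ∫ x dμ_ψ`, which by
polarization and density determines `A`). -/
structure SelfAdjointWithPVM (H : Type*) [NormedAddCommGroup H] [InnerProductSpace ℂ H]
    [CompleteSpace H] where
  domain : Submodule ℂ H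
  op : domain →ₗ[ℂ] H
  symm : ∀ ψ φ : domain, (inner ℂ (op ψ) (φ : H) : ℂ) = inner ℂ (ψ : H) (op φ)
  proj : Set ℝ → H →L[ℂ] H
  proj_sa : ∀ s, IsSelfAdjoint (proj s)
  proj_inter : ∀ s t, MeasurableSet s → MeasurableSet t → proj s ∘L proj t = proj (s ∩ t)
  proj_univ : proj Set.univ = 1
  proj_add : ∀ f : ℕ → Set ℝ, (∀ n, MeasurableSet (f n)) →
    Pairwise (Function.onFun Disjoint f) →
    ∀ ψ, HasSum (fun n => proj (f n) ψ) (proj (⋃ n, f n) ψ)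
  diag : H → Measure ℝ
  diag_eq : ∀ ψ s, MeasurableSet s →
    diag ψ s = ENNReal.ofReal (RCLike.re (inner ℂ ψ (proj s ψ) : ℂ))
  mem_domain_iff : ∀ ψ : H, ψ ∈ domain ↔ ∫⁻ x, ENNReal.ofReal (x ^ 2) ∂(diag ψ) < ⊤
  quad : ∀ ψ : domain, RCLike.re (inner ℂ (ψ : H) (op ψ) : ℂ) = ∫ x, x ∂(diag ψ)

namespace SelfAdjointWithPVM

variable {H : Type*} [NormedAddCommGroup H] [InnerProductSpace ℂ H] [CompleteSpace H]

/-- `μ` is an eigenvalue of `A`. -/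
def Eigenvalue (A : SelfAdjointWithPVM H) (μ : ℝ) : Prop :=
  ∃ ψ : A.domain, (ψ : H) ≠ 0 ∧ A.op ψ = (μ : ℂ) • (ψ : H)

/-- The resolvent `(A - z)⁻¹ ψ`, defined as the solution `φ` of `(A - z) φ = ψ` (which
exists and is unique for nonreal `z` since `A` is self-adjoint). -/
noncomputable def resolventAt (A : SelfAdjointWithPVM H) (z : ℂ) (ψ : H) : H :=
  if h : ∃ φ : A.domain, A.op φ - z • (φ : H) = ψ then (h.choose : H) else 0

/-- Strong resolvent convergence `Aₙ → A`. -/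
def StrongResolventConv (Aseq : ℕ → SelfAdjointWithPVM H) (A : SelfAdjointWithPVM H) : Prop :=
  ∀ ψ : H, Filter.Tendsto (fun n => (Aseq n).resolventAt Complex.I ψ) Filter.atTop
    (nhds (A.resolventAt Complex.I ψ))

end SelfAdjointWithPVM

/-- The dimension of the range of an operator (as an extended natural number); for an
orthogonal projection `P` this is `tr P = dim Ran P ∈ [0,∞]`. -/
noncomputable def projRank {H : Type*} [NormedAddCommGroup H] [InnerProductSpace ℂ H]
    (P : H →L[ℂ] H) : ℕ∞ :=
  Cardinal.toENat (Module.rank ℂ (LinearMap.range (P : H →ₗ[ℂ] H)))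

/-- The trace norm `‖T‖₁ ∈ [0,∞]`, via the characterization
`‖T‖₁ = sup { ∑ |⟪f i, T (e i)⟫| : (e i), (f i) finite orthonormal families }`. -/
noncomputable def traceNorm {H : Type*} [NormedAddCommGroup H] [InnerProductSpace ℂ H]
    (T : H →L[ℂ] H) : ℝ≥0∞ :=
  ⨆ (k : ℕ) (e : Fin k → H) (f : Fin k → H) (_ : Orthonormal ℂ e) (_ : Orthonormal ℂ f),
    ENNReal.ofReal (∑ i, ‖(inner ℂ (f i) (T (e i)) : ℂ)‖)


section AuxLemmas

variable {H : Type*} [NormedAddCommGroup H] [InnerProductSpace ℂ H] [CompleteSpace H]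
  (A : SelfAdjointWithPVM H)

namespace SelfAdjointWithPVM

lemma proj_symm' (s : Set ℝ) (x y : H) :
    (inner ℂ (A.proj s x) y : ℂ) = inner ℂ x (A.proj s y) :=
  (A.proj_sa s).isSymmetric x y

lemma proj_empty' : A.proj ∅ = 0 := by
  ext ψ
  have h := A.proj_add (fun _ => (∅ : Set ℝ)) (fun _ => MeasurableSet.empty)
    (by intro i j hij; simp [Function.onFun]) ψ
  rw [Set.iUnion_empty] at h
  have h0 : Filter.Tendsto (fun _ : ℕ => A.proj ∅ ψ) Filter.atTop (nhds 0) :=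
    h.summable.tendsto_atTop_zero
  have := tendsto_nhds_unique h0 tendsto_const_nhds
  simpa using this.symm

lemma proj_union' {s t : Set ℝ} (hs : MeasurableSet s) (ht : MeasurableSet t)
    (hdisj : Disjoint s t) (ψ : H) :
    A.proj (s ∪ t) ψ = A.proj s ψ + A.proj t ψ := by
  classical
  set f : ℕ → Set ℝ := fun n => if n = 0 then s else if n = 1 then t else ∅ with hf
  have hmeas : ∀ n, MeasurableSet (f n) := by
    intro n; simp only [hf]; split_ifs <;> simp [hs, ht]
  have hpair : Pairwise (Function.onFun Disjoint f) := by
    intro i j hij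
    simp only [Function.onFun, hf]
    split_ifs with h1 h2 h3 h4 h5 h6 h7 h8 <;>
      first
        | (exfalso; omega)
        | exact hdisj
        | exact hdisj.symm
        | simp
  have hU : (⋃ n, f n) = s ∪ t := by
    apply Set.Subset.antisymm
    · apply Set.iUnion_subset; intro n; simp only [hf]
      split_ifs <;> simp
    · rintro x (hx | hx)
      · exact Set.mem_iUnion.2 ⟨0, by simp [hf, hx]⟩
      · exact Set.mem_iUnion.2 ⟨1, by simp [hf, hx]⟩
  have h1 := A.proj_add f hmeas hpair ψ
  rw [hU] at h1
  have h2 : HasSum (fun n => A.proj (f n) ψ) (A.proj s ψ + A.proj t ψ) := by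
    have h3 := hasSum_sum_of_ne_finset_zero
      (s := ({0, 1} : Finset ℕ)) (L := SummationFilter.unconditional ℕ) (f := fun n => A.proj (f n) ψ) ?_
    · have : ∑ n ∈ ({0, 1} : Finset ℕ), A.proj (f n) ψ = A.proj s ψ + A.proj t ψ := by
        rw [Finset.sum_insert (by simp), Finset.sum_singleton]
        simp [hf]
      rwa [this] at h3
    · intro n hn
      simp only [Finset.mem_insert, Finset.mem_singleton] at hn
      push_neg at hn
      simp [hf, hn.1, hn.2, A.proj_empty']
  exact h1.unique h2

lemma diag_finite' (ψ : H) : IsFiniteMeasure (A.diag ψ) := by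
  constructor
  rw [A.diag_eq ψ Set.univ MeasurableSet.univ]
  exact ENNReal.ofReal_lt_top

lemma diag_proj' {s : Set ℝ} (hs : MeasurableSet s) (ψ : H) :
    A.diag (A.proj s ψ) = (A.diag ψ).restrict s := by
  ext t ht
  have hcomp : A.proj s (A.proj t (A.proj s ψ)) = A.proj (t ∩ s) ψ := by
    have e1 : A.proj s (A.proj t (A.proj s ψ)) = A.proj (s ∩ t) (A.proj s ψ) := by
      rw [← ContinuousLinearMap.comp_apply, A.proj_inter s t hs ht]
    have e2 : A.proj (s ∩ t) (A.proj s ψ) = A.proj ((s ∩ t) ∩ s) ψ := by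
      rw [← ContinuousLinearMap.comp_apply, A.proj_inter _ s (hs.inter ht) hs]
    have e3 : (s ∩ t) ∩ s = t ∩ s := by
      ext x; simp only [Set.mem_inter_iff]; tauto
    rw [e1, e2, e3]
  have hinner : (inner ℂ (A.proj s ψ) (A.proj t (A.proj s ψ)) : ℂ)
      = inner ℂ ψ (A.proj (t ∩ s) ψ) := by
    rw [A.proj_symm' s ψ, hcomp]
  rw [A.diag_eq (A.proj s ψ) t ht, Measure.restrict_apply ht,
    A.diag_eq ψ (t ∩ s) (ht.inter hs), hinner]

lemma proj_mem_domain' {s : Set ℝ} (hs : MeasurableSet s) {ψ : H} (hψ : ψ ∈ A.domain) :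
    A.proj s ψ ∈ A.domain := by
  rw [A.mem_domain_iff]
  rw [A.diag_proj' hs ψ]
  calc ∫⁻ x in s, ENNReal.ofReal (x ^ 2) ∂(A.diag ψ)
      ≤ ∫⁻ x, ENNReal.ofReal (x ^ 2) ∂(A.diag ψ) :=
        MeasureTheory.setLIntegral_le_lintegral s _
    _ < ⊤ := (A.mem_domain_iff ψ).1 hψ

lemma integrable_id' {ψ : H} (hψ : ψ ∈ A.domain) :
    MeasureTheory.Integrable (fun x : ℝ => x) (A.diag ψ) := by
  haveI := A.diag_finite' ψ
  constructor
  · exact aestronglyMeasurable_id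
  · rw [MeasureTheory.hasFiniteIntegral_def]
    have hb : ∀ x : ℝ, ‖x‖ₑ ≤ 1 + ENNReal.ofReal (x ^ 2) := by
      intro x
      rw [← ENNReal.ofReal_one, ← ENNReal.ofReal_add zero_le_one (sq_nonneg x),
        ← ofReal_norm]
      refine ENNReal.ofReal_le_ofReal ?_
      rw [Real.norm_eq_abs]
      nlinarith [abs_nonneg x, sq_abs x, sq_nonneg (|x| - 1)]
    calc ∫⁻ x, ‖x‖ₑ ∂(A.diag ψ)
        ≤ ∫⁻ x, (1 + ENNReal.ofReal (x ^ 2)) ∂(A.diag ψ) :=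
          MeasureTheory.lintegral_mono fun x => hb x
      _ = (A.diag ψ) Set.univ + ∫⁻ x, ENNReal.ofReal (x ^ 2) ∂(A.diag ψ) := by
          rw [MeasureTheory.lintegral_add_left measurable_const, MeasureTheory.lintegral_one]
      _ < ⊤ := ENNReal.add_lt_top.2
          ⟨MeasureTheory.measure_lt_top _ _, (A.mem_domain_iff ψ).1 hψ⟩

lemma norm_sq_proj' {s : Set ℝ} (hs : MeasurableSet s) (ψ : H) :
    ((A.diag ψ) s).toReal = ‖A.proj s ψ‖ ^ 2 := by
  have hidem : A.proj s (A.proj s ψ) = A.proj s ψ := by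
    rw [← ContinuousLinearMap.comp_apply, A.proj_inter s s hs hs, Set.inter_self]
  have h1 : (inner ℂ ψ (A.proj s ψ) : ℂ) = inner ℂ (A.proj s ψ) (A.proj s ψ) := by
    conv_lhs => rw [← hidem]
    rw [← A.proj_symm' s ψ (A.proj s ψ)]
  rw [A.diag_eq ψ s hs, h1, inner_self_eq_norm_sq]
  rw [ENNReal.toReal_ofReal (by positivity)]

end SelfAdjointWithPVM

end AuxLemmas

/-- **The abstract variational principle** used in the proof of Lemma 3: if `M ⊆ 𝔇(A)` is
a `k`-dimensional subspace with `‖(A - μ)ψ‖ < ρ ‖ψ‖` for all nonzero `ψ ∈ M`, where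
`μ = (λ₀+λ₁)/2` and `ρ = (λ₁-λ₀)/2`, then `dim Ran P_{(λ₀,λ₁)}(A) ≥ k`. -/
theorem rank_spectral_projection_ge_of_subspace
    {𝓗 : Type*} [NormedAddCommGroup 𝓗] [InnerProductSpace ℂ 𝓗] [CompleteSpace 𝓗]
    (A : SelfAdjointWithPVM 𝓗) (lam0 lam1 : ℝ) (hlam : lam0 < lam1) (k : ℕ)
    (M : Submodule ℂ 𝓗) (hMdom : M ≤ A.domain)
    (hfd : FiniteDimensional ℂ M) (hdim : Module.finrank ℂ M = k)
    (hest : ∀ ψ : A.domain, (ψ : 𝓗) ∈ M → (ψ : 𝓗) ≠ 0 →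
      ‖A.op ψ - (((lam0 + lam1) / 2 : ℝ) : ℂ) • (ψ : 𝓗)‖ < ((lam1 - lam0) / 2) * ‖(ψ : 𝓗)‖) :
    (k : ℕ∞) ≤ projRank (A.proj (Set.Ioo lam0 lam1)) := by
  classical
  set μ : ℝ := (lam0 + lam1) / 2 with hμ
  set ρ : ℝ := (lam1 - lam0) / 2 with hρ
  have hρpos : 0 < ρ := by rw [hρ]; linarith
  have hsI : MeasurableSet (Set.Ioo lam0 lam1) := measurableSet_Ioo
  have hsp : MeasurableSet (Set.Ici lam1) := measurableSet_Ici
  have hsm : MeasurableSet (Set.Iic lam0) := measurableSet_Iic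
  have key : ∀ ψ : 𝓗, ψ ∈ M → ψ ≠ 0 → A.proj (Set.Ioo lam0 lam1) ψ ≠ 0 := by
    intro ψ hψM hψ0 hP0
    set ν := A.diag ψ with hν
    haveI := A.diag_finite' ψ
    have hψdom : ψ ∈ A.domain := hMdom hψM
    set ψp := A.proj (Set.Ici lam1) ψ with hψp
    set ψm := A.proj (Set.Iic lam0) ψ with hψm
    have hmemp : ψp ∈ A.domain := by rw [hψp]; exact A.proj_mem_domain' hsp hψdom
    have hmemm : ψm ∈ A.domain := by rw [hψm]; exact A.proj_mem_domain' hsm hψdom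
    -- decomposition ψ = ψm + ψp
    have hU1 : (Set.Iic lam0) ∪ (Set.Ioo lam0 lam1 ∪ Set.Ici lam1) = Set.univ := by
      ext x
      simp only [Set.mem_union, Set.mem_Iic, Set.mem_Ioo, Set.mem_Ici, Set.mem_univ, iff_true]
      rcases le_or_gt x lam0 with h | h
      · exact Or.inl h
      · rcases lt_or_ge x lam1 with h' | h'
        · exact Or.inr (Or.inl ⟨h, h'⟩)
        · exact Or.inr (Or.inr h')
    have hd1 : Disjoint (Set.Iic lam0) (Set.Ioo lam0 lam1 ∪ Set.Ici lam1) := by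
      rw [Set.disjoint_left]
      rintro x hx (h | h)
      · exact absurd (Set.mem_Iic.1 hx) (not_le.2 h.1)
      · exact absurd (Set.mem_Iic.1 hx) (not_le.2 (lt_of_lt_of_le hlam h))
    have hd2 : Disjoint (Set.Ioo lam0 lam1) (Set.Ici lam1) := by
      rw [Set.disjoint_left]
      intro x hx h
      exact absurd (Set.mem_Ici.1 h) (not_le.2 hx.2)
    have hdec : ψ = ψm + ψp := by
      have e0 : A.proj Set.univ ψ = ψ := by rw [A.proj_univ]; rfl
      have e1 := A.proj_union' hsm (hsI.union hsp) hd1 ψ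
      have e2 := A.proj_union' hsI hsp hd2 ψ
      rw [hU1, e0, e2, hP0, zero_add, ← hψm, ← hψp] at e1
      exact e1
    -- orthogonality
    have horth : (inner ℂ ψp ψm : ℂ) = 0 := by
      have e1 : A.proj (Set.Ici lam1) ψm = A.proj (Set.Ici lam1 ∩ Set.Iic lam0) ψ := by
        rw [hψm, ← ContinuousLinearMap.comp_apply, A.proj_inter _ _ hsp hsm]
      have e2 : Set.Ici lam1 ∩ Set.Iic lam0 = ∅ := by
        ext x
        simp only [Set.mem_inter_iff, Set.mem_Ici, Set.mem_Iic, Set.mem_empty_iff_false,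
          iff_false, not_and, not_le]
        intro h1
        linarith
      rw [hψp, A.proj_symm', e1, e2, A.proj_empty']
      simp
    have horth' : (inner ℂ ψm ψp : ℂ) = 0 := by
      rw [← inner_conj_symm, horth, map_zero]
    have hre_pm : RCLike.re (inner ℂ ψp ψm : ℂ) = 0 := by rw [horth]; simp
    have hre_mp : RCLike.re (inner ℂ ψm ψp : ℂ) = 0 := by rw [horth']; simp
    have hnorm : ‖ψ‖ ^ 2 = ‖ψm‖ ^ 2 + ‖ψp‖ ^ 2 := by
      rw [hdec, norm_add_sq (𝕜 := ℂ), hre_mp]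
      ring
    -- domain elements and operator values
    have hcp : ((⟨ψp, hmemp⟩ : A.domain) : 𝓗) = ψp := rfl
    have hcm : ((⟨ψm, hmemm⟩ : A.domain) : 𝓗) = ψm := rfl
    have hcd : ((⟨ψ, hψdom⟩ : A.domain) : 𝓗) = ψ := rfl
    set a := A.op ⟨ψp, hmemp⟩ with ha
    set b := A.op ⟨ψm, hmemm⟩ with hb
    have hopdec : A.op ⟨ψ, hψdom⟩ = b + a := by
      have : (⟨ψ, hψdom⟩ : A.domain) = ⟨ψm, hmemm⟩ + ⟨ψp, hmemp⟩ :=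
        Subtype.ext (by simp [hdec])
      rw [this, map_add, ← ha, ← hb]
    -- quadratic form identities
    have hquadp : RCLike.re (inner ℂ ψp a : ℂ) = ∫ x in Set.Ici lam1, x ∂ν := by
      have h := A.quad ⟨ψp, hmemp⟩
      rw [← ha, hcp] at h
      rw [h, hψp, A.diag_proj' hsp ψ, ← hν]
    have hquadm : RCLike.re (inner ℂ ψm b : ℂ) = ∫ x in Set.Iic lam0, x ∂ν := by
      have h := A.quad ⟨ψm, hmemm⟩
      rw [← hb, hcm] at h
      rw [h, hψm, A.diag_proj' hsm ψ, ← hν]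
    -- norms as measures
    have hnp : (ν (Set.Ici lam1)).toReal = ‖ψp‖ ^ 2 := by
      have := A.norm_sq_proj' hsp ψ
      rw [← hν, ← hψp] at this
      exact this
    have hnm : (ν (Set.Iic lam0)).toReal = ‖ψm‖ ^ 2 := by
      have := A.norm_sq_proj' hsm ψ
      rw [← hν, ← hψm] at this
      exact this
    -- integral bounds
    have hintid : MeasureTheory.Integrable (fun x : ℝ => x) ν := by
      rw [hν]; exact A.integrable_id' hψdom
    have hintp : MeasureTheory.IntegrableOn (fun x : ℝ => x) (Set.Ici lam1) ν :=
      hintid.restrict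
    have hintm : MeasureTheory.IntegrableOn (fun x : ℝ => x) (Set.Iic lam0) ν :=
      hintid.restrict
    have hconstp : MeasureTheory.IntegrableOn (fun _ : ℝ => μ) (Set.Ici lam1) ν :=
      MeasureTheory.integrableOn_const (measure_ne_top _ _)
    have hconstm : MeasureTheory.IntegrableOn (fun _ : ℝ => μ) (Set.Iic lam0) ν :=
      MeasureTheory.integrableOn_const (measure_ne_top _ _)
    have hlowp : ρ * (ν (Set.Ici lam1)).toReal
        ≤ (∫ x in Set.Ici lam1, x ∂ν) - μ * (ν (Set.Ici lam1)).toReal := by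
      have hsplit : ∫ x in Set.Ici lam1, (x - μ) ∂ν
          = (∫ x in Set.Ici lam1, x ∂ν) - μ * (ν (Set.Ici lam1)).toReal := by
        rw [MeasureTheory.integral_sub hintp hconstp, MeasureTheory.setIntegral_const,
          smul_eq_mul, measureReal_def, mul_comm]
      rw [← hsplit]
      refine MeasureTheory.setIntegral_ge_of_const_le_real hsp (measure_ne_top _ _) ?_
        (hintp.sub hconstp)
      intro x hx
      have hx1 : lam1 ≤ x := hx
      rw [hρ, hμ]
      linarith
    have hlowm : ρ * (ν (Set.Iic lam0)).toReal
        ≤ μ * (ν (Set.Iic lam0)).toReal - (∫ x in Set.Iic lam0, x ∂ν) := by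
      have hsplit : ∫ x in Set.Iic lam0, (μ - x) ∂ν
          = μ * (ν (Set.Iic lam0)).toReal - (∫ x in Set.Iic lam0, x ∂ν) := by
        rw [MeasureTheory.integral_sub hconstm hintm, MeasureTheory.setIntegral_const,
          smul_eq_mul, measureReal_def, mul_comm]
      rw [← hsplit]
      refine MeasureTheory.setIntegral_ge_of_const_le_real hsm (measure_ne_top _ _) ?_
        (hconstm.sub hintm)
      intro x hx
      have hx1 : x ≤ lam0 := hx
      rw [hρ, hμ]
      linarith
    -- the inner ℂ product computation
    have hw : A.op ⟨ψ, hψdom⟩ - ((μ : ℝ) : ℂ) • ψ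
        = (a - ((μ : ℝ) : ℂ) • ψp) + (b - ((μ : ℝ) : ℂ) • ψm) := by
      rw [hopdec]
      nth_rewrite 1 [hdec]
      rw [smul_add]
      abel
    have hsymm : RCLike.re (inner ℂ ψp b : ℂ) = RCLike.re (inner ℂ ψm a : ℂ) := by
      have h := A.symm ⟨ψm, hmemm⟩ ⟨ψp, hmemp⟩
      rw [← ha, ← hb, hcp, hcm] at h
      calc RCLike.re (inner ℂ ψp b : ℂ) = RCLike.re (inner ℂ b ψp : ℂ) := by
            rw [← inner_conj_symm]
            exact RCLike.conj_re _
        _ = RCLike.re (inner ℂ ψm a : ℂ) := by rw [h]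
    have hkey : RCLike.re (inner ℂ (ψp - ψm) (A.op ⟨ψ, hψdom⟩ - ((μ : ℝ) : ℂ) • ψ) : ℂ)
        = (RCLike.re (inner ℂ ψp a : ℂ) - μ * ‖ψp‖ ^ 2)
          - (RCLike.re (inner ℂ ψm b : ℂ) - μ * ‖ψm‖ ^ 2) := by
      have hsmul : ∀ x y : 𝓗, RCLike.re (inner ℂ x (((μ : ℝ) : ℂ) • y) : ℂ)
          = μ * RCLike.re (inner ℂ x y : ℂ) := by
        intro x y
        rw [inner_smul_right]
        exact RCLike.re_ofReal_mul μ _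
      rw [hw]
      simp only [inner_sub_left, inner_add_right, inner_sub_right, map_add, map_sub, hsmul]
      rw [hsymm, hre_pm, hre_mp, inner_self_eq_norm_sq, inner_self_eq_norm_sq]
      ring
    -- upper bound
    have hub : RCLike.re (inner ℂ (ψp - ψm) (A.op ⟨ψ, hψdom⟩ - ((μ : ℝ) : ℂ) • ψ) : ℂ)
        ≤ ‖ψp - ψm‖ * ‖A.op ⟨ψ, hψdom⟩ - ((μ : ℝ) : ℂ) • ψ‖ :=
      le_trans (RCLike.re_le_norm _) (norm_inner_le_norm _ _)
    have hnormeta : ‖ψp - ψm‖ = ‖ψ‖ := by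
      have h2 : ‖ψp - ψm‖ ^ 2 = ‖ψ‖ ^ 2 := by
        rw [norm_sub_sq (𝕜 := ℂ), hre_pm, hnorm]
        ring
      rw [← Real.sqrt_sq (norm_nonneg (ψp - ψm)), h2, Real.sqrt_sq (norm_nonneg ψ)]
    have hψpos : (0 : ℝ) < ‖ψ‖ := norm_pos_iff.2 hψ0
    have hestψ := hest ⟨ψ, hψdom⟩ hψM hψ0
    rw [hcd] at hestψ
    have hlow : ρ * ‖ψ‖ ^ 2
        ≤ RCLike.re (inner ℂ (ψp - ψm) (A.op ⟨ψ, hψdom⟩ - ((μ : ℝ) : ℂ) • ψ) : ℂ) := by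
      rw [hkey, hquadp, hquadm]
      have e1 := hlowp
      have e2 := hlowm
      rw [hnp] at e1
      rw [hnm] at e2
      rw [hnorm]
      linarith only [e1, e2]
    have hfin : ‖ψ‖ * ‖A.op ⟨ψ, hψdom⟩ - ((μ : ℝ) : ℂ) • ψ‖ < ‖ψ‖ * (ρ * ‖ψ‖) :=
      mul_lt_mul_of_pos_left hestψ hψpos
    rw [hnormeta] at hub
    have hring : ‖ψ‖ * (ρ * ‖ψ‖) = ρ * ‖ψ‖ ^ 2 := by ring
    linarith only [hlow, hub, hfin, hring.le, hring.ge]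
  -- rank argument
  let P := A.proj (Set.Ioo lam0 lam1)
  let f : M →ₗ[ℂ] ↥(LinearMap.range (P : 𝓗 →ₗ[ℂ] 𝓗)) :=
    LinearMap.codRestrict _ ((P : 𝓗 →ₗ[ℂ] 𝓗).comp M.subtype)
      (fun x => LinearMap.mem_range_self _ _)
  have hinj : Function.Injective f := by
    rw [injective_iff_map_eq_zero]
    intro x hx
    by_contra hx0
    have hxne : (x : 𝓗) ≠ 0 := fun h => hx0 (Subtype.ext h)
    apply key x x.2 hxne
    have : P (x : 𝓗) = 0 := by
      have := congrArg (Subtype.val) hx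
      simpa [f, LinearMap.codRestrict] using this
    exact this
  have hrank : Module.rank ℂ M ≤ Module.rank ℂ ↥(LinearMap.range (P : 𝓗 →ₗ[ℂ] 𝓗)) :=
    LinearMap.rank_le_of_injective f hinj
  have hkcard : (k : Cardinal) = Module.rank ℂ M := by
    rw [← hdim]
    exact_mod_cast (Module.finrank_eq_rank ℂ M)
  calc (k : ℕ∞) = Cardinal.toENat (Module.rank ℂ M) := by
        rw [← hkcard, Cardinal.toENat_nat]
    _ ≤ projRank (A.proj (Set.Ioo lam0 lam1)) := Cardinal.toENat.monotone' hrank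

end
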